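/- Assume the DCBO parameters satisfy condition (B1): inf_{α>0} E[|1 − γ¹ + γ²ζ|^α] < 1 for ζ ~ N(0,1), and γ̄¹ ≥ γ̄². Then for almost every sample point ω ∈ Ω, at least one of the following holds: (a) the best objective value f(p_n(ω)) is strictly decreased infinitely often (there are infinitely many n with f(p_{n+1}(ω)) < f(p_n(ω))); or (b) the sample path converges, i.e. there exists a vector x_∞(ω) ∈ S such that ‖x_n^i(ω) − x_∞(ω)‖ → 0 as n → ∞ for every agent i ∈ {1,…,N}. -/

import Mathlib

open MeasureTheory ProbabilityTheory Filter Topology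

noncomputable section

/-- `Euc d` is the `d`-dimensional Euclidean space `ℝ^d`. -/
abbrev Euc (d : ℕ) := EuclideanSpace ℝ (Fin d)

/-- Entrywise (Hadamard) product on `ℝ^d`. -/
def hadamard {d : ℕ} (u v : Euc d) : Euc d := WithLp.toLp 2 (fun k => u k * v k)

/-- The anisotropic DCBO update map `F₁(x,y,η) = x + γ¹(y−x) + γ²(y−x)⊙η`. -/
def F1 {d : ℕ} (γ1 γ2 : ℝ) (x y η : Euc d) : Euc d :=
  x + γ1 • (y - x) + γ2 • hadamard (y - x) η

/-- The isotropic DCBO update map `F₂(x,y,η) = x + γ̄¹(y−x) + γ̄²‖y−x‖η/√d`. -/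
def F2 {d : ℕ} (γ1 γ2 : ℝ) (x y η : Euc d) : Euc d :=
  x + γ1 • (y - x) + ((γ2 * ‖y - x‖) / Real.sqrt d) • η

/-- The standard Gaussian measure `N_d(0, I_d)` on `ℝ^d`. -/
def stdGaussian (d : ℕ) : Measure (Euc d) :=
  (Measure.pi fun _ : Fin d => gaussianReal 0 1).map (EuclideanSpace.equiv (Fin d) ℝ).symm

/-! If the best value `f(p_n)` drops only finitely often, then from some time on every tie keeps
the leader index from increasing, so the leader, and with it the target `p_n = v`, freezes. From
then on each agent contracts towards `v`: an `F₁`-agent coordinatewise by the factor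
`|1 - γ¹ - γ² η_k|`, an `F₂`-agent in norm by at most `1 - γ̄¹ + γ̄² ‖η‖ / √d`. These factors are
i.i.d., and a suitable power of them has mean `ρ < 1`: by (B1) for `F₁`, and for `F₂` because
`E‖η‖ < √d` and `γ̄² ≤ γ̄¹`. The expected partial products are then at most `ρⁿ`, hence summable,
so the products tend to `0` almost surely, simultaneously for the countably many starting times. -/

open Finset
open scoped ENNReal

section StdGaussian

variable {d : ℕ}

lemma stdGaussian_eq_stdGaussian_euclideanSpace :
    stdGaussian d = ProbabilityTheory.stdGaussian (Euc d) :=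
  map_pi_eq_stdGaussian

instance : IsGaussian (stdGaussian d) := by
  rw [stdGaussian_eq_stdGaussian_euclideanSpace]
  infer_instance

instance : (stdGaussian d).IsOpenPosMeasure := by
  have : (gaussianReal 0 1).IsOpenPosMeasure :=
    (gaussianReal_absolutelyContinuous' 0 one_ne_zero).isOpenPosMeasure
  exact (EuclideanSpace.equiv (Fin d) ℝ).symm.continuous.isOpenPosMeasure_map
    (EuclideanSpace.equiv (Fin d) ℝ).symm.surjective

lemma map_eval_stdGaussian (k : Fin d) :
    (stdGaussian d).map (fun v => v k) = gaussianReal 0 1 := by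
  rw [_root_.stdGaussian, Measure.map_map (by fun_prop) (by fun_prop)]
  exact (measurePreserving_eval (fun _ => gaussianReal 0 1) k).map_eq

lemma map_neg_eval_stdGaussian (k : Fin d) :
    (stdGaussian d).map (fun v => -v k) = gaussianReal 0 1 := by
  conv_rhs => rw [← neg_zero, ← gaussianReal_map_neg, ← map_eval_stdGaussian k,
    Measure.map_map (by fun_prop) (by fun_prop)]
  rfl

lemma integral_sq_gaussianReal : ∫ t, t ^ 2 ∂gaussianReal 0 1 = 1 := by
  rw [← variance_of_integral_eq_zero aemeasurable_id' integral_id_gaussianReal,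
    variance_fun_id_gaussianReal, NNReal.coe_one]

lemma integrable_norm_sq_stdGaussian :
    Integrable (fun v : Euc d => ‖v‖ ^ 2) (stdGaussian d) :=
  IsGaussian.memLp_two_id.integrable_norm_pow two_ne_zero

lemma integral_norm_sq_stdGaussian : ∫ v, ‖v‖ ^ 2 ∂stdGaussian d = d := by
  have hcoord (k : Fin d) : ∫ v, v k ^ 2 ∂stdGaussian d = 1 := by
    rw [← integral_sq_gaussianReal, ← map_eval_stdGaussian k,
      integral_map (by fun_prop) (by fun_prop)]
  simp_rw [EuclideanSpace.real_norm_sq_eq]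
  rw [integral_finsetSum _ fun k _ => ?_]
  · simp [hcoord]
  · exact (IsGaussian.memLp_two_id.const_inner (EuclideanSpace.single k 1)).integrable_sq
      |>.congr (.of_forall fun v => by simp [EuclideanSpace.inner_single_left])

lemma integral_norm_stdGaussian_lt (hd : 1 ≤ d) :
    ∫ v, ‖v‖ ∂stdGaussian d < Real.sqrt d := by
  set s := Real.sqrt d
  have hs : 0 < s := Real.sqrt_pos.2 (by exact_mod_cast hd)
  have hnorm : Integrable (fun v : Euc d => ‖v‖) (stdGaussian d) :=
    IsGaussian.integrable_id.norm
  have hlin : Integrable (fun v : Euc d => s ^ 2 - 2 * s * ‖v‖) (stdGaussian d) :=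
    (integrable_const _).sub (hnorm.const_mul _)
  have hsq : Integrable (fun v : Euc d => (s - ‖v‖) ^ 2) (stdGaussian d) :=
    (hlin.add integrable_norm_sq_stdGaussian).congr
      (.of_forall fun v => by simp only [Pi.add_apply]; ring)
  -- `(s - ‖v‖)²` is positive on the open ball of radius `s`, which has positive measure
  have hpos : 0 < ∫ v, (s - ‖v‖) ^ 2 ∂stdGaussian d := by
    refine (integral_pos_iff_support_of_nonneg (fun v => sq_nonneg _) hsq).2 ?_
    refine (Metric.isOpen_ball.measure_pos _ (Metric.nonempty_ball.2 hs)).trans_le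
      (measure_mono fun v (hv : v ∈ Metric.ball (0 : Euc d) s) => ?_)
    rw [mem_ball_zero_iff] at hv
    exact pow_ne_zero 2 (sub_ne_zero.2 hv.ne')
  have hexpand : ∫ v, (s - ‖v‖) ^ 2 ∂stdGaussian d
      = s ^ 2 - 2 * s * ∫ v, ‖v‖ ∂stdGaussian d + ∫ v, ‖v‖ ^ 2 ∂stdGaussian d := by
    simp_rw [sub_sq]
    rw [integral_add hlin integrable_norm_sq_stdGaussian,
      integral_sub (integrable_const _) (hnorm.const_mul _), integral_const, integral_const_mul]
    simp
  rw [hexpand, integral_norm_sq_stdGaussian, Real.sq_sqrt (Nat.cast_nonneg d)] at hpos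
  nlinarith [Real.sq_sqrt (Nat.cast_nonneg d : (0 : ℝ) ≤ d)]

end StdGaussian

section ContractionRates

variable {d : ℕ}

def F1Rate (γ1 γ2 : ℝ) (k : Fin d) (e : Euc d) : ℝ := |1 - γ1 - γ2 * e k|

def F2Rate (γ1 γ2 : ℝ) (e : Euc d) : ℝ := 1 - γ1 + γ2 * ‖e‖ / Real.sqrt d

lemma F2Rate_nonneg {γ1 γ2 : ℝ} (h1 : γ1 ≤ 1) (h2 : 0 ≤ γ2) (e : Euc d) :
    0 ≤ F2Rate γ1 γ2 e := by
  have : 0 ≤ γ2 * ‖e‖ / Real.sqrt d := by positivity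
  rw [F2Rate]
  linarith

lemma F1_self (γ1 γ2 : ℝ) (x e : Euc d) : F1 γ1 γ2 x x e = x := by
  ext k
  simp [F1, hadamard]

lemma F2_self (γ1 γ2 : ℝ) (x e : Euc d) : F2 γ1 γ2 x x e = x := by
  simp [F2]

lemma F1_sub_apply (γ1 γ2 : ℝ) (x y e : Euc d) (k : Fin d) :
    (F1 γ1 γ2 x y e - y) k = (1 - γ1 - γ2 * e k) * (x - y) k := by
  simp only [F1, hadamard, PiLp.sub_apply, PiLp.add_apply, PiLp.smul_apply, smul_eq_mul]
  ring

lemma norm_F2_sub_le {γ1 γ2 : ℝ} (h1 : γ1 ≤ 1) (h2 : 0 ≤ γ2) (x y e : Euc d) :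
    ‖F2 γ1 γ2 x y e - y‖ ≤ F2Rate γ1 γ2 e * ‖x - y‖ := by
  have hrw : F2 γ1 γ2 x y e - y = (1 - γ1) • (x - y) + (γ2 * ‖x - y‖ / Real.sqrt d) • e := by
    rw [F2, norm_sub_rev]
    module
  calc ‖F2 γ1 γ2 x y e - y‖
      ≤ ‖(1 - γ1) • (x - y)‖ + ‖(γ2 * ‖x - y‖ / Real.sqrt d) • e‖ := hrw ▸ norm_add_le _ _
    _ = F2Rate γ1 γ2 e * ‖x - y‖ := by
      rw [norm_smul, norm_smul, Real.norm_of_nonneg (by linarith),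
        Real.norm_of_nonneg (by positivity), F2Rate]
      ring

lemma lintegral_F1Rate_rpow (γ1 γ2 : ℝ) (k : Fin d) {α : ℝ} (hα : 0 < α) :
    ∫⁻ e, ENNReal.ofReal (F1Rate γ1 γ2 k e ^ α) ∂stdGaussian d
      = ENNReal.ofReal (∫ t, |1 - γ1 + γ2 * t| ^ α ∂gaussianReal 0 1) := by
  have hint : Integrable (fun t => |1 - γ1 + γ2 * t| ^ α) (gaussianReal 0 1) := by
    have hp : ENNReal.ofReal α ≠ 0 := by simpa using hα
    have := ((memLp_const (1 - γ1)).add ((memLp_id_gaussianReal' (μ := 0) (v := 1)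
      (ENNReal.ofReal α) ENNReal.ofReal_ne_top).const_mul γ2)).integrable_norm_rpow hp
      ENNReal.ofReal_ne_top
    simpa [ENNReal.toReal_ofReal hα.le] using this
  rw [ofReal_integral_eq_lintegral_ofReal hint (.of_forall fun t => by positivity),
    ← map_neg_eval_stdGaussian k, lintegral_map (by fun_prop) (by fun_prop)]
  simp [F1Rate, sub_eq_add_neg]

lemma exists_lintegral_F1Rate_rpow_lt_one {γ1 γ2 : ℝ}
    (h : sInf {r : ℝ | ∃ α : ℝ, 0 < α ∧
      r = ∫ t, |1 - γ1 + γ2 * t| ^ α ∂(gaussianReal 0 1)} < 1) :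
    ∃ α : ℝ, 0 < α ∧
      ∀ k : Fin d, ∫⁻ e, ENNReal.ofReal (F1Rate γ1 γ2 k e ^ α) ∂stdGaussian d < 1 := by
  obtain ⟨α, hα, hlt⟩ :
      ∃ α : ℝ, 0 < α ∧ ∫ t, |1 - γ1 + γ2 * t| ^ α ∂gaussianReal 0 1 < 1 := by
    by_contra! hge
    exact h.not_ge (le_csInf ⟨_, 1, one_pos, rfl⟩ fun r ⟨α, hα, hr⟩ => hr ▸ hge α hα)
  refine ⟨α, hα, fun k => ?_⟩
  rw [lintegral_F1Rate_rpow γ1 γ2 k hα]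
  exact ENNReal.ofReal_lt_one.2 hlt

lemma lintegral_F2Rate_lt_one (hd : 1 ≤ d) {γ1 γ2 : ℝ} (h1 : γ1 ∈ Set.Ioc 0 1) (h2 : 0 ≤ γ2)
    (h12 : γ2 ≤ γ1) : ∫⁻ e, ENNReal.ofReal (F2Rate γ1 γ2 e) ∂stdGaussian d < 1 := by
  have hs : 0 < Real.sqrt d := Real.sqrt_pos.2 (by exact_mod_cast hd)
  have hnorm : Integrable (fun e : Euc d => ‖e‖) (stdGaussian d) :=
    IsGaussian.integrable_id.norm
  rw [← ofReal_integral_eq_lintegral_ofReal _ (.of_forall (F2Rate_nonneg h1.2 h2)),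
    ENNReal.ofReal_lt_one]
  · have hE := integral_norm_stdGaussian_lt hd
    have hmean : γ2 * ∫ e, ‖e‖ ∂stdGaussian d < γ1 * Real.sqrt d := by
      rcases h2.eq_or_lt with rfl | h2
      · simpa using mul_pos h1.1 hs
      · nlinarith
    simp only [F2Rate]
    rw [integral_add (integrable_const _) ((hnorm.const_mul γ2).div_const _), integral_const,
      integral_div, integral_const_mul]
    simp only [probReal_univ, one_smul]
    linarith [(div_lt_iff₀ hs).2 hmean]
  · exact (integrable_const _).add ((hnorm.const_mul γ2).div_const _)

end ContractionRates

section IndependentProducts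

lemma tendsto_zero_of_tendsto_ofReal_rpow {ι : Type*} {l : Filter ι} {u : ι → ℝ}
    (hu : ∀ i, 0 ≤ u i) {α : ℝ} (hα : 0 < α)
    (h : Tendsto (fun i => ENNReal.ofReal (u i ^ α)) l (𝓝 0)) : Tendsto u l (𝓝 0) := by
  have hpow : Tendsto (fun i => u i ^ α) l (𝓝 0) := by
    simpa [Function.comp_def, ENNReal.toReal_ofReal (Real.rpow_nonneg (hu _) α)] using
      (ENNReal.tendsto_toReal ENNReal.zero_ne_top).comp h
  simpa [Real.rpow_rpow_inv (hu _) hα.ne', Real.zero_rpow (inv_ne_zero hα.ne')] using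
    hpow.rpow_const (p := α⁻¹) (Or.inr (inv_nonneg.2 hα.le))

variable {Ω : Type*} [MeasurableSpace Ω] {P : Measure Ω}

lemma ae_tendsto_prod_range_zero {Y : ℕ → Ω → ℝ≥0∞} (hY : ∀ n, Measurable (Y n))
    (hindep : iIndepFun Y P) {ρ : ℝ≥0∞} (hρ : ρ < 1) (hle : ∀ n, ∫⁻ ω, Y n ω ∂P ≤ ρ) :
    ∀ᵐ ω ∂P, Tendsto (fun n => ∏ m ∈ range n, Y m ω) atTop (𝓝 0) := by
  have hprod (n : ℕ) : Measurable fun ω => ∏ m ∈ range n, Y m ω :=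
    Finset.measurable_prod _ fun m _ => hY m
  have hsum : ∫⁻ ω, ∑' n, ∏ m ∈ range n, Y m ω ∂P ≠ ∞ := by
    rw [lintegral_tsum fun n => (hprod n).aemeasurable]
    refine ne_top_of_le_ne_top (b := ∑' n, ρ ^ n) ?_ (ENNReal.tsum_le_tsum fun n => ?_)
    · exact (ENNReal.tsum_geometric ρ).symm ▸ ENNReal.inv_ne_top.2 (tsub_pos_of_lt hρ).ne'
    · rw [lintegral_prod_eq_prod_lintegral_of_indepFun _ _ hindep hY]
      exact (prod_le_prod' fun m _ => hle m).trans_eq (by simp)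
  filter_upwards [ae_lt_top (Measurable.tsum hprod) hsum] with ω hω
  exact ENNReal.tendsto_atTop_zero_of_tsum_ne_top hω.ne

lemma ae_tendsto_prod_Ico_zero {E : Type*} [MeasurableSpace E] {X : ℕ → Ω → E}
    (hX : ∀ n, Measurable (X n)) (hindep : iIndepFun X P) {μ : Measure E}
    (hlaw : ∀ n, P.map (X n) = μ) {g : E → ℝ} (hg : Measurable g) (hg0 : ∀ v, 0 ≤ g v)
    {α : ℝ} (hα : 0 < α) (hlt : ∫⁻ v, ENNReal.ofReal (g v ^ α) ∂μ < 1) :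
    ∀ᵐ ω ∂P, ∀ n₀, Tendsto (fun n => ∏ m ∈ Ico n₀ n, g (X m ω)) atTop (𝓝 0) := by
  refine ae_all_iff.2 fun n₀ => ?_
  have hφ : Measurable fun v => ENNReal.ofReal (g v ^ α) := (hg.pow_const α).ennreal_ofReal
  have hshift := ae_tendsto_prod_range_zero
    (Y := fun m ω => ENNReal.ofReal (g (X (n₀ + m) ω) ^ α)) (fun m => hφ.comp (hX _))
    ((hindep.precomp (add_right_injective n₀)).comp _ fun _ => hφ) hlt
    fun m => by rw [← hlaw (n₀ + m), lintegral_map hφ (hX _)]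
  filter_upwards [hshift] with ω hω
  have hreal : Tendsto (fun j => ∏ m ∈ range j, g (X (n₀ + m) ω)) atTop (𝓝 0) := by
    refine tendsto_zero_of_tendsto_ofReal_rpow (fun j => prod_nonneg fun m _ => hg0 _) hα ?_
    refine hω.congr fun j => ?_
    rw [← Real.finsetProd_rpow _ _ (fun m _ => hg0 _), ENNReal.ofReal_prod_of_nonneg
      fun m _ => Real.rpow_nonneg (hg0 _) α]
  refine (hreal.comp (tendsto_sub_atTop_nat n₀)).congr' ?_
  filter_upwards [eventually_ge_atTop n₀] with n hn
  simp [prod_Ico_eq_prod_range]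

end IndependentProducts

section Contraction

lemma tendsto_norm_zero_of_norm_succ_le {E : Type*} [SeminormedAddGroup E] {u : ℕ → E}
    {c : ℕ → ℝ} {n₀ : ℕ} (hc : ∀ n, 0 ≤ c n) (hu : ∀ n ≥ n₀, ‖u (n + 1)‖ ≤ c n * ‖u n‖)
    (hprod : Tendsto (fun n => ∏ m ∈ Ico n₀ n, c m) atTop (𝓝 0)) :
    Tendsto (fun n => ‖u n‖) atTop (𝓝 0) := by
  have hbound : ∀ n ≥ n₀, ‖u n‖ ≤ (∏ m ∈ Ico n₀ n, c m) * ‖u n₀‖ := by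
    intro n hn
    induction n, hn using Nat.le_induction with
    | base => simp
    | succ n hn ih =>
      calc ‖u (n + 1)‖ ≤ c n * ‖u n‖ := hu n hn
        _ ≤ c n * ((∏ m ∈ Ico n₀ n, c m) * ‖u n₀‖) := mul_le_mul_of_nonneg_left ih (hc n)
        _ = (∏ m ∈ Ico n₀ (n + 1), c m) * ‖u n₀‖ := by rw [prod_Ico_succ_top hn]; ring
  refine squeeze_zero' (.of_forall fun n => norm_nonneg _) (eventually_atTop.2 ⟨n₀, hbound⟩) ?_
  simpa using hprod.mul_const ‖u n₀‖

variable {d : ℕ}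

lemma tendsto_norm_sub_of_F1_orbit {γ1 γ2 : ℝ} {y e : ℕ → Euc d} {v : Euc d} {n₀ : ℕ}
    (hy : ∀ n ≥ n₀, y (n + 1) = F1 γ1 γ2 (y n) v (e n))
    (hprod : ∀ k, Tendsto (fun n => ∏ m ∈ Ico n₀ n, F1Rate γ1 γ2 k (e m)) atTop (𝓝 0)) :
    Tendsto (fun n => ‖y n - v‖) atTop (𝓝 0) := by
  have hcoord (k : Fin d) : Tendsto (fun n => (y n - v) k) atTop (𝓝 0) := by
    refine tendsto_zero_iff_norm_tendsto_zero.2 <|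
      tendsto_norm_zero_of_norm_succ_le (fun _ => abs_nonneg _) (fun n hn => ?_) (hprod k)
    rw [hy n hn, F1_sub_apply, norm_mul, Real.norm_eq_abs]
  have := ((PiLp.continuous_toLp 2 _).tendsto 0).comp (tendsto_pi_nhds.2 hcoord)
  exact tendsto_zero_iff_norm_tendsto_zero.1 (by simpa [Function.comp_def] using this)

lemma tendsto_norm_sub_of_F2_orbit {γ1 γ2 : ℝ} (h1 : γ1 ≤ 1) (h2 : 0 ≤ γ2)
    {y e : ℕ → Euc d} {v : Euc d} {n₀ : ℕ} (hy : ∀ n ≥ n₀, y (n + 1) = F2 γ1 γ2 (y n) v (e n))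
    (hprod : Tendsto (fun n => ∏ m ∈ Ico n₀ n, F2Rate γ1 γ2 (e m)) atTop (𝓝 0)) :
    Tendsto (fun n => ‖y n - v‖) atTop (𝓝 0) :=
  tendsto_norm_zero_of_norm_succ_le (fun _ => F2Rate_nonneg h1 h2 _)
    (fun n hn => hy n hn ▸ norm_F2_sub_le h1 h2 _ _ _) hprod

end Contraction

section Leader

variable {E β κ : Type*} [LinearOrder β] {f : E → β} {x : ℕ → κ → E} {ι : ℕ → κ}

lemma antitone_leader_value (hmin : ∀ n j, f (x n (ι n)) ≤ f (x n j))
    (hstay : ∀ n, x (n + 1) (ι n) = x n (ι n)) : Antitone fun n => f (x n (ι n)) :=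
  antitone_nat_of_succ_le fun n => (hmin (n + 1) (ι n)).trans_eq (congrArg f (hstay n))

lemma exists_forall_ge_leader_eq [LinearOrder κ] [WellFoundedLT κ]
    (hmin : ∀ n j, f (x n (ι n)) ≤ f (x n j))
    (htie : ∀ n j, f (x n j) = f (x n (ι n)) → ι n ≤ j)
    (hstay : ∀ n, x (n + 1) (ι n) = x n (ι n))
    (hfin : {n | f (x (n + 1) (ι (n + 1))) < f (x n (ι n))}.Finite) :
    ∃ n₁, ∀ n ≥ n₁, x n (ι n) = x n₁ (ι n₁) := by
  obtain ⟨n₀, hn₀⟩ :=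
    eventually_atTop.1 (Nat.cofinite_eq_atTop ▸ hfin.eventually_cofinite_notMem)
  -- once the best value stalls, the old leader ties with the new one
  have hι (n : ℕ) (hn : n ≥ n₀) : ι (n + 1) ≤ ι n := by
    refine htie _ _ ?_
    rw [hstay]
    exact le_antisymm (not_lt.1 (hn₀ n hn)) (antitone_leader_value hmin hstay n.le_succ)
  obtain ⟨j, hj⟩ := WellFoundedLT.antitone_chain_condition (f := fun j => ι (n₀ + j))
    (antitone_nat_of_succ_le fun j => hι _ (Nat.le_add_right _ _))
  refine ⟨n₀ + j, fun n hn => ?_⟩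
  induction n, hn using Nat.le_induction with
  | base => rfl
  | succ n hn ih =>
    have hιn : ι (n + 1) = ι n := by
      obtain ⟨m, rfl⟩ := Nat.exists_eq_add_of_le (le_trans (Nat.le_add_right n₀ j) hn)
      exact (hj (m + 1) (by omega)).symm.trans (hj m (by omega))
    rw [hιn, hstay, ih]

end Leader

section Noise

variable {Ω : Type*} [MeasurableSpace Ω] {P : Measure Ω} {d N : ℕ}
  {η : ℕ → Fin N → Ω → Euc d}

lemma ae_tendsto_prod_F1Rate (hηmeas : ∀ n i, Measurable (η n i))
    (hηdist : ∀ n i, Measure.map (η n i) P = stdGaussian d)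
    (hηindep : iIndepFun (fun (q : ℕ × Fin N) ω => η q.1 q.2 ω) P) {γ1 γ2 : ℝ}
    (hB1a : sInf {r : ℝ | ∃ α : ℝ, 0 < α ∧
      r = ∫ t, |1 - γ1 + γ2 * t| ^ α ∂(gaussianReal 0 1)} < 1) :
    ∀ᵐ ω ∂P, ∀ i k n₀,
      Tendsto (fun n => ∏ m ∈ Ico n₀ n, F1Rate γ1 γ2 k (η m i ω)) atTop (𝓝 0) := by
  obtain ⟨α, hα, hlt⟩ := exists_lintegral_F1Rate_rpow_lt_one (d := d) hB1a
  exact ae_all_iff.2 fun i => ae_all_iff.2 fun k =>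
    ae_tendsto_prod_Ico_zero (hηmeas · i) (hηindep.precomp (Prod.mk_left_injective i))
      (hηdist · i) (by unfold F1Rate; fun_prop) (fun _ => abs_nonneg _) hα (hlt k)

lemma ae_tendsto_prod_F2Rate (hd : 1 ≤ d) (hηmeas : ∀ n i, Measurable (η n i))
    (hηdist : ∀ n i, Measure.map (η n i) P = stdGaussian d)
    (hηindep : iIndepFun (fun (q : ℕ × Fin N) ω => η q.1 q.2 ω) P) {γ1 γ2 : ℝ}
    (h1 : γ1 ∈ Set.Ioc 0 1) (h2 : 0 ≤ γ2) (h12 : γ2 ≤ γ1) :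
    ∀ᵐ ω ∂P, ∀ i n₀,
      Tendsto (fun n => ∏ m ∈ Ico n₀ n, F2Rate γ1 γ2 (η m i ω)) atTop (𝓝 0) :=
  ae_all_iff.2 fun i =>
    ae_tendsto_prod_Ico_zero (hηmeas · i) (hηindep.precomp (Prod.mk_left_injective i))
      (hηdist · i) (by unfold F2Rate; fun_prop) (F2Rate_nonneg h1.2 h2) one_pos
      (by simpa using lintegral_F2Rate_lt_one hd h1 h2 h12)

end Noise

theorem dcbo_converges_or_updates_infinitely_often_general
    {Ω : Type*} [MeasurableSpace Ω] (P : Measure Ω) [IsProbabilityMeasure P]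
    {d N : ℕ} (hd : 1 ≤ d)
    (f : Euc d → EReal)
    (S : Set (Euc d)) (hS : S = {y | f y < ⊤})
    (γ1 γ2 γb1 γb2 : ℝ)
    (hγb1 : γb1 ∈ Set.Ioo (0:ℝ) 1) (hγb2 : 0 ≤ γb2)
    -- condition (B1): `inf_{α>0} E[|1 − γ¹ + γ²ζ|^α] < 1` and `γ̄¹ ≥ γ̄²`
    (hB1a : sInf {r : ℝ | ∃ α : ℝ, 0 < α ∧
        r = ∫ t, |1 - γ1 + γ2 * t| ^ α ∂(gaussianReal 0 1)} < 1)
    (hB1b : γb2 ≤ γb1)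
    (choice : Fin N → Bool)
    (η : ℕ → Fin N → Ω → Euc d)
    (hηmeas : ∀ n i, Measurable (η n i))
    (hηdist : ∀ n i, Measure.map (η n i) P = stdGaussian d)
    (hηindep : iIndepFun (fun (q : ℕ × Fin N) ω => η q.1 q.2 ω) P)
    (x : ℕ → Fin N → Ω → Euc d)
    (hx0S : ∀ i ω, x 0 i ω ∈ S)
    (p : ℕ → Ω → Euc d) (ι : ℕ → Ω → Fin N)
    (hp : ∀ n ω, p n ω = x n (ι n ω) ω)
    (hmin : ∀ n ω j, f (x n (ι n ω) ω) ≤ f (x n j ω))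
    (htie : ∀ n ω j, f (x n j ω) = f (x n (ι n ω) ω) → ι n ω ≤ j)
    (hrec : ∀ n i ω, x (n + 1) i ω =
      if choice i then F1 γ1 γ2 (x n i ω) (p n ω) (η n i ω)
      else F2 γb1 γb2 (x n i ω) (p n ω) (η n i ω)) :
    ∀ᵐ ω ∂P,
      {n : ℕ | f (p (n + 1) ω) < f (p n ω)}.Infinite ∨
      ∃ xLim ∈ S, ∀ i : Fin N,
        Tendsto (fun n => ‖x n i ω - xLim‖) atTop (nhds 0) := by
  have hF1 := ae_tendsto_prod_F1Rate hηmeas hηdist hηindep hB1a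
  have hF2 := ae_tendsto_prod_F2Rate hd hηmeas hηdist hηindep (Set.Ioo_subset_Ioc_self hγb1)
    hγb2 hB1b
  filter_upwards [hF1, hF2] with ω hω1 hω2
  refine or_iff_not_imp_left.2 fun hfin => ?_
  have hstay (n : ℕ) : x (n + 1) (ι n ω) ω = x n (ι n ω) ω := by
    rw [hrec, ← hp]
    cases choice (ι n ω) <;> simp [F1_self, F2_self]
  simp only [hp, Set.not_infinite] at hfin
  obtain ⟨n₁, hn₁⟩ := exists_forall_ge_leader_eq (hmin · ω) (htie · ω) hstay hfin
  have hy (i : Fin N) (n : ℕ) (hn : n ≥ n₁) : x (n + 1) i ω = if choice i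
      then F1 γ1 γ2 (x n i ω) (p n₁ ω) (η n i ω) else F2 γb1 γb2 (x n i ω) (p n₁ ω) (η n i ω) := by
    rw [hrec, hp, hp, hn₁ n hn]
  refine ⟨p n₁ ω, ?_, fun i => ?_⟩
  · have hanti : Antitone fun n => f (x n (ι n ω) ω) :=
      antitone_leader_value (x := (x · · ω)) (hmin · ω) hstay
    have h0 : f (x 0 (ι 0 ω) ω) < ⊤ := by simpa [hS] using hx0S (ι 0 ω) ω
    rw [hS, hp]
    exact (hanti (Nat.zero_le n₁)).trans_lt h0
  · cases hc : choice i
    · exact tendsto_norm_sub_of_F2_orbit hγb1.2.le hγb2 (by simpa [hc] using hy i) (hω2 i n₁)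
    · exact tendsto_norm_sub_of_F1_orbit (by simpa [hc] using hy i) (hω1 i · n₁)

/-- Under condition (B1) — `inf_{α>0} E[|1 − γ¹ + γ²ζ|^α] < 1` for
`ζ ~ N(0,1)`, and `γ̄¹ ≥ γ̄²` — for almost every sample point of the DCBO dynamics,
either the best objective value `f(p_n)` is strictly decreased infinitely often, or
the sample path converges to some vector `x_∞ ∈ S`. -/
theorem dcbo_converges_or_updates_infinitely_often
    {Ω : Type*} [MeasurableSpace Ω] (P : Measure Ω) [IsProbabilityMeasure P]
    {d N : ℕ} (hd : 1 ≤ d) (hN : 1 ≤ N)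
    (f : Euc d → EReal) (hf : Measurable f)
    (S : Set (Euc d)) (hS : S = {y | f y < ⊤}) (hSne : S.Nonempty) (hScl : IsClosed S)
    (γ1 γ2 γb1 γb2 : ℝ)
    (hγ1 : γ1 ∈ Set.Ioo (0:ℝ) 1) (hγ2 : 0 ≤ γ2)
    (hγb1 : γb1 ∈ Set.Ioo (0:ℝ) 1) (hγb2 : 0 ≤ γb2)
    -- condition (B1): `inf_{α>0} E[|1 − γ¹ + γ²ζ|^α] < 1` and `γ̄¹ ≥ γ̄²`
    (hB1a : sInf {r : ℝ | ∃ α : ℝ, 0 < α ∧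
        r = ∫ t, |1 - γ1 + γ2 * t| ^ α ∂(gaussianReal 0 1)} < 1)
    (hB1b : γb2 ≤ γb1)
    (choice : Fin N → Bool)
    (η : ℕ → Fin N → Ω → Euc d)
    (hηmeas : ∀ n i, Measurable (η n i))
    (hηdist : ∀ n i, Measure.map (η n i) P = stdGaussian d)
    (hηindep : iIndepFun (fun (q : ℕ × Fin N) ω => η q.1 q.2 ω) P)
    (x : ℕ → Fin N → Ω → Euc d)
    (hx0meas : ∀ i, Measurable (x 0 i))
    (hx0S : ∀ i ω, x 0 i ω ∈ S)
    -- the noises are independent of the initial positions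
    (hindep0 : Indep (⨆ i : Fin N, MeasurableSpace.comap (x 0 i) inferInstance)
        (⨆ (n : ℕ) (i : Fin N), MeasurableSpace.comap (η n i) inferInstance) P)
    (p : ℕ → Ω → Euc d) (ι : ℕ → Ω → Fin N)
    (hp : ∀ n ω, p n ω = x n (ι n ω) ω)
    (hmin : ∀ n ω j, f (x n (ι n ω) ω) ≤ f (x n j ω))
    (htie : ∀ n ω j, f (x n j ω) = f (x n (ι n ω) ω) → ι n ω ≤ j)
    (hrec : ∀ n i ω, x (n + 1) i ω =
      if choice i then F1 γ1 γ2 (x n i ω) (p n ω) (η n i ω)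
      else F2 γb1 γb2 (x n i ω) (p n ω) (η n i ω)) :
    ∀ᵐ ω ∂P,
      {n : ℕ | f (p (n + 1) ω) < f (p n ω)}.Infinite ∨
      ∃ xLim ∈ S, ∀ i : Fin N,
        Tendsto (fun n => ‖x n i ω - xLim‖) atTop (nhds 0) :=
  dcbo_converges_or_updates_infinitely_often_general P hd f S hS γ1 γ2 γb1 γb2 hγb1 hγb2 hB1a hB1b
    choice η hηmeas hηdist hηindep x hx0S p ι hp hmin htie hrec
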